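/- Let n ≥ 1, let s : ℝⁿ → ℝ be C^∞, and suppose there is a C^∞ function A₀ : ℝⁿ → ℝ such that ‖∇s(x)‖² = 1 + s(x) · A₀(x) for all x (s is a normal defining function). Then for every integer m ≥ 1 there exist C^∞ functions w and A_m on ℝⁿ such that the function s̄(x) := s(x) · (1 + s(x) · w(x)) satisfies ‖∇s̄(x)‖² = 1 + s(x)^m · A_m(x) for all x. -/

import Mathlib

/-!
Correct `s̄` one order at a time. If `‖∇s̄‖² = 1 + s^(k+1) A` with `s̄ = s (1 + s W)`,
add `s^(k+2) w` to `s̄`. Since `⟪∇s̄, ∇s⟫ = 1 + O(s)` by normality of `s`, this changes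
`‖∇s̄‖²` by `2 (k+2) w s^(k+1) + O(s^(k+2))`, so `w = -A / (2 (k+2))` kills the error
term of order `k+1`.
-/

open InnerProductSpace RealInnerProductSpace
open scoped Gradient

section GradientCalculus

variable {F : Type*} [NormedAddCommGroup F] [InnerProductSpace ℝ F] [CompleteSpace F]
  {f g : F → ℝ} {x : F}

theorem gradient_fun_add (hf : DifferentiableAt ℝ f x) (hg : DifferentiableAt ℝ g x) :
    ∇ (fun z => f z + g z) x = ∇ f x + ∇ g x := by
  simp only [gradient, fderiv_fun_add hf hg, map_add]

theorem gradient_const_add (c : ℝ) : ∇ (fun z => c + f z) x = ∇ f x := by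
  simp only [gradient, fderiv_const_add]

theorem gradient_fun_mul (hf : DifferentiableAt ℝ f x) (hg : DifferentiableAt ℝ g x) :
    ∇ (fun z => f z * g z) x = f x • ∇ g x + g x • ∇ f x := by
  simp only [gradient, fderiv_fun_mul hf hg, map_add, map_smul]

theorem gradient_fun_pow (hf : DifferentiableAt ℝ f x) (n : ℕ) :
    ∇ (fun z => f z ^ n) x = ((n : ℝ) * f x ^ (n - 1)) • ∇ f x := by
  simp only [gradient, fderiv_fun_pow n hf, map_smul, nsmul_eq_mul]

theorem gradient_fun_pow_succ_mul (hf : DifferentiableAt ℝ f x) (hg : DifferentiableAt ℝ g x)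
    (k : ℕ) :
    ∇ (fun z => f z ^ (k + 1) * g z) x
      = f x ^ k • ((((k : ℝ) + 1) * g x) • ∇ f x + f x • ∇ g x) := by
  rw [gradient_fun_mul (f := fun z => f z ^ (k + 1)) (hf.pow _) hg, gradient_fun_pow hf,
    Nat.add_sub_cancel, Nat.cast_succ]
  module

theorem ContDiff.gradient {m n : WithTop ℕ∞} (hf : ContDiff ℝ n f) (hmn : m + 1 ≤ n) :
    ContDiff ℝ m (∇ f) :=
  (toDual ℝ F).symm.contDiff.comp (hf.fderiv_right hmn)

end GradientCalculus

/-- One correction step, pointwise: `a = ∇s̄`, `g = ∇s`, `b = ∇w`, `σ = s`. -/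
theorem norm_add_correction_sq {E : Type*} [NormedAddCommGroup E] [InnerProductSpace ℝ E]
    (k : ℕ) {a g b : E} {σ α β ω : ℝ}
    (ha : ‖a‖ ^ 2 = 1 + σ ^ (k + 1) * α) (hag : ⟪a, g⟫ = 1 + σ * β)
    (hω : 2 * ((k : ℝ) + 2) * ω = -α) :
    ‖a + σ ^ (k + 1) • ((((k : ℝ) + 2) * ω) • g + σ • b)‖ ^ 2
      = 1 + σ ^ (k + 2) *
        (-(α * β) + 2 * ⟪a, b⟫ + σ ^ k * ‖(((k : ℝ) + 2) * ω) • g + σ • b‖ ^ 2) := by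
  rw [norm_add_sq_real, real_inner_smul_right, norm_smul, mul_pow, Real.norm_eq_abs, sq_abs,
    inner_add_right, real_inner_smul_right, real_inner_smul_right, hag, ha]
  linear_combination (σ ^ (k + 1) + σ ^ (k + 2) * β) * hω

section Correction

variable {F : Type*} [NormedAddCommGroup F] [InnerProductSpace ℝ F] [CompleteSpace F]
  {s A₀ : F → ℝ}

theorem inner_gradient_mul_one_add_mul_gradient {W : F → ℝ} {x : F}
    (hs : DifferentiableAt ℝ s x) (hW : DifferentiableAt ℝ W x)
    (h : ‖∇ s x‖ ^ 2 = 1 + s x * A₀ x) :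
    ⟪∇ (fun z => s z * (1 + s z * W z)) x, ∇ s x⟫
      = 1 + s x * (A₀ x + 2 * W x + 2 * s x * W x * A₀ x + s x * ⟪∇ W x, ∇ s x⟫) := by
  rw [gradient_fun_mul (g := fun z => 1 + s z * W z) hs
    ((differentiableAt_const 1).add (hs.mul hW)), gradient_const_add (f := fun z => s z * W z),
    gradient_fun_mul hs hW]
  simp only [inner_add_left, real_inner_smul_left, real_inner_self_eq_norm_sq, h]
  ring

theorem exists_unit_defining_order_add_two_of_order_add_one (hs : ContDiff ℝ (⊤ : ℕ∞) s)
    (hA₀ : ContDiff ℝ (⊤ : ℕ∞) A₀) (h : ∀ x, ‖∇ s x‖ ^ 2 = 1 + s x * A₀ x) (k : ℕ) {W A : F → ℝ}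
    (hW : ContDiff ℝ (⊤ : ℕ∞) W) (hA : ContDiff ℝ (⊤ : ℕ∞) A)
    (hWA : ∀ x, ‖∇ (fun z => s z * (1 + s z * W z)) x‖ ^ 2 = 1 + s x ^ (k + 1) * A x) :
    ∃ W' A' : F → ℝ, ContDiff ℝ (⊤ : ℕ∞) W' ∧ ContDiff ℝ (⊤ : ℕ∞) A' ∧
      ∀ x, ‖∇ (fun z => s z * (1 + s z * W' z)) x‖ ^ 2 = 1 + s x ^ (k + 2) * A' x := by
  set w : F → ℝ := fun x => -A x / (2 * ((k : ℝ) + 2))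
  set sbar : F → ℝ := fun z => s z * (1 + s z * W z)
  set v : F → F := fun x => (((k : ℝ) + 2) * w x) • ∇ s x + s x • ∇ w x
  set B : F → ℝ := fun x => A₀ x + 2 * W x + 2 * s x * W x * A₀ x + s x * ⟪∇ W x, ∇ s x⟫
  have hw : ContDiff ℝ (⊤ : ℕ∞) w := by fun_prop
  have hsbar : ContDiff ℝ (⊤ : ℕ∞) sbar := by fun_prop
  have hgs : ContDiff ℝ (⊤ : ℕ∞) (∇ s) := hs.gradient le_rfl
  have hgw : ContDiff ℝ (⊤ : ℕ∞) (∇ w) := hw.gradient le_rfl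
  have hWs : ContDiff ℝ (⊤ : ℕ∞) fun x => ⟪∇ W x, ∇ s x⟫ := (hW.gradient le_rfl).inner ℝ hgs
  have hsbarw : ContDiff ℝ (⊤ : ℕ∞) fun x => ⟪∇ sbar x, ∇ w x⟫ :=
    (hsbar.gradient le_rfl).inner ℝ hgw
  have hv : ContDiff ℝ (⊤ : ℕ∞) fun x => ‖v x‖ ^ 2 :=
    (show ContDiff ℝ (⊤ : ℕ∞) v by fun_prop).norm_sq ℝ
  have hB : ContDiff ℝ (⊤ : ℕ∞) B := by fun_prop
  refine ⟨fun x => W x + s x ^ k * w x,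
    fun x => -(A x * B x) + 2 * ⟪∇ sbar x, ∇ w x⟫ + s x ^ k * ‖v x‖ ^ 2, by fun_prop,
    by fun_prop, fun x => ?_⟩
  have hsx : DifferentiableAt ℝ s x := hs.differentiable (by simp) x
  have hwx : DifferentiableAt ℝ w x := hw.differentiable (by simp) x
  have h_eq : (fun z => s z * (1 + s z * (W z + s z ^ k * w z)))
      = fun z => sbar z + s z ^ (k + 1 + 1) * w z := by
    funext z; ring
  have h_grad : ∇ (fun z => sbar z + s z ^ (k + 1 + 1) * w z) x
      = ∇ sbar x + s x ^ (k + 1) • v x := by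
    rw [gradient_fun_add (g := fun z => s z ^ (k + 1 + 1) * w z)
      (hsbar.differentiable (by simp) x) ((hsx.pow _).mul hwx), gradient_fun_pow_succ_mul hsx hwx]
    simp only [v]
    push_cast
    module
  rw [h_eq, h_grad]
  exact norm_add_correction_sq k (hWA x)
    (inner_gradient_mul_one_add_mul_gradient hsx (hW.differentiable (by simp) x) (h x))
    (by simp only [w]; field_simp)

theorem exists_unit_defining_order_add_one (hs : ContDiff ℝ (⊤ : ℕ∞) s)
    (hA₀ : ContDiff ℝ (⊤ : ℕ∞) A₀) (h : ∀ x, ‖∇ s x‖ ^ 2 = 1 + s x * A₀ x) (k : ℕ) :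
    ∃ W A : F → ℝ, ContDiff ℝ (⊤ : ℕ∞) W ∧ ContDiff ℝ (⊤ : ℕ∞) A ∧
      ∀ x, ‖∇ (fun z => s z * (1 + s z * W z)) x‖ ^ 2 = 1 + s x ^ (k + 1) * A x := by
  induction k with
  | zero => exact ⟨0, A₀, contDiff_const, hA₀, fun x => by simpa using h x⟩
  | succ k ih =>
    obtain ⟨W, A, hW, hA, hWA⟩ := ih
    exact exists_unit_defining_order_add_two_of_order_add_one hs hA₀ h k hW hA hWA

end Correction

theorem unit_defining_function_all_orders_general
    (n : ℕ) (s A₀ : EuclideanSpace ℝ (Fin n) → ℝ)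
    (hs : ContDiff ℝ (⊤ : ℕ∞) s) (hA₀ : ContDiff ℝ (⊤ : ℕ∞) A₀)
    (h : ∀ x, ‖gradient s x‖ ^ 2 = 1 + s x * A₀ x)
    (m : ℕ) (hm : 1 ≤ m) :
    ∃ w Am : EuclideanSpace ℝ (Fin n) → ℝ,
      ContDiff ℝ (⊤ : ℕ∞) w ∧ ContDiff ℝ (⊤ : ℕ∞) Am ∧
      ∀ x, ‖gradient (fun z => s z * (1 + s z * w z)) x‖ ^ 2 = 1 + s x ^ m * Am x := by
  obtain ⟨k, rfl⟩ := Nat.exists_eq_add_of_le' hm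
  exact exists_unit_defining_order_add_one hs hA₀ h k

/-- Flat-background instance of Proposition 2.6: if `s : ℝⁿ → ℝ` is a smooth normal defining
function (`‖∇s‖² = 1 + s·A₀` with `A₀` smooth), then for every `m ≥ 1` there are smooth
functions `w` and `Aₘ` such that `s̄ := s·(1 + s·w)` satisfies `‖∇s̄‖² = 1 + sᵐ·Aₘ`. -/
theorem unit_defining_function_all_orders
    (n : ℕ) (hn : 1 ≤ n) (s A₀ : EuclideanSpace ℝ (Fin n) → ℝ)
    (hs : ContDiff ℝ (⊤ : ℕ∞) s) (hA₀ : ContDiff ℝ (⊤ : ℕ∞) A₀)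
    (h : ∀ x, ‖gradient s x‖ ^ 2 = 1 + s x * A₀ x)
    (m : ℕ) (hm : 1 ≤ m) :
    ∃ w Am : EuclideanSpace ℝ (Fin n) → ℝ,
      ContDiff ℝ (⊤ : ℕ∞) w ∧ ContDiff ℝ (⊤ : ℕ∞) Am ∧
      ∀ x, ‖gradient (fun z => s z * (1 + s z * w z)) x‖ ^ 2 = 1 + s x ^ m * Am x :=
  unit_defining_function_all_orders_general n s A₀ hs hA₀ h m hm
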